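/- arXiv:0804.4373 — 5 statements merged into one kernel-verified Lean document; each statement's English description precedes it below -/
import Mathlib

section
/- Let H be a Hilbert space and let s₁, …, s_N be isometries on H with mutually orthogonal ranges, i.e. sᵢ* sⱼ = δ_{ij}·1. For a finite index set J of multi-indices of a fixed length m and operators α_J on a Hilbert space K, the operator norm of ∑_{J} α_J ⊗ s_J on K ⊗ H equals the square root of the norm of ∑_J α_J* α_J; in particular, ‖α_K‖ ≤ ‖∑_J α_J ⊗ s_J‖ for every fixed multi-index K. -/
/-- The composition `s_J = s_{j₁} ∘ ⋯ ∘ s_{j_m}` for a multi-index `J`. -/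
noncomputable def sWord {H : Type*} [NormedAddCommGroup H] [InnerProductSpace ℂ H]
    [CompleteSpace H] {N m : ℕ} (s : Fin N → H →L[ℂ] H) (J : Fin m → Fin N) :
    H →L[ℂ] H :=
  (List.ofFn fun i => s (J i)).prod

lemma sWord_star_mul {H : Type*} [NormedAddCommGroup H] [InnerProductSpace ℂ H]
    [CompleteSpace H] {N : ℕ} (s : Fin N → H →L[ℂ] H)
    (hs : ∀ i j, star (s i) * s j = if i = j then 1 else 0) :
    ∀ {m : ℕ} (J K : Fin m → Fin N),
      star (sWord s J) * sWord s K = if J = K then 1 else 0 := by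
  intro m
  induction m with
  | zero =>
    intro J K
    simp [sWord, List.ofFn_zero, Subsingleton.elim J K]
  | succ n ih =>
    intro J K
    have hJ : sWord s J = s (J 0) * sWord s (J ∘ Fin.succ) := by
      simp [sWord, List.ofFn_succ, Function.comp]
    have hK : sWord s K = s (K 0) * sWord s (K ∘ Fin.succ) := by
      simp [sWord, List.ofFn_succ, Function.comp]
    rw [hJ, hK, star_mul]
    have key : star (sWord s (J ∘ Fin.succ)) * (star (s (J 0)) * s (K 0)) *
        sWord s (K ∘ Fin.succ) =
        star (sWord s (J ∘ Fin.succ)) * star (s (J 0)) *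
          (s (K 0) * sWord s (K ∘ Fin.succ)) := by noncomm_ring
    rw [← key, hs]
    by_cases h0 : J 0 = K 0
    · rw [if_pos h0, mul_one, ih]
      by_cases ht : J ∘ Fin.succ = K ∘ Fin.succ
      · rw [if_pos ht, if_pos]
        funext i
        refine Fin.cases h0 (fun j => ?_) i
        exact congrFun ht j
      · rw [if_neg ht, if_neg]
        intro h
        exact ht (by funext j; exact congrFun h j.succ)
    · rw [if_neg h0, mul_zero, zero_mul, if_neg]
      intro h
      exact h0 (congrFun h 0)

/-- if `s₁,…,s_N` are isometries on `H` with mutually orthogonal ranges,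
`π : B(K) → B(E)` and `ι : B(H) → B(E)` are isometric unital *-homomorphisms with commuting
ranges (modelling `α ↦ α ⊗ 1` and `x ↦ 1 ⊗ x` on `E = K ⊗ H`), then the norm of
`∑_J α_J ⊗ s_J` equals `√‖∑_J α_J* α_J‖`, and in particular dominates each `‖α_K‖`. -/
theorem stmt0 {H K E : Type*}
    [NormedAddCommGroup H] [InnerProductSpace ℂ H] [CompleteSpace H]
    [NormedAddCommGroup K] [InnerProductSpace ℂ K] [CompleteSpace K]
    [NormedAddCommGroup E] [InnerProductSpace ℂ E] [CompleteSpace E]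
    {N m : ℕ} (s : Fin N → H →L[ℂ] H)
    (hs : ∀ i j, star (s i) * s j = if i = j then 1 else 0)
    (π : (K →L[ℂ] K) →⋆ₐ[ℂ] (E →L[ℂ] E)) (hπ : Isometry π)
    (ι : (H →L[ℂ] H) →⋆ₐ[ℂ] (E →L[ℂ] E)) (hι : Isometry ι)
    (hcomm : ∀ a b, Commute (π a) (ι b))
    (𝒥 : Finset (Fin m → Fin N)) (α : (Fin m → Fin N) → K →L[ℂ] K) :
    ‖∑ J ∈ 𝒥, π (α J) * ι (sWord s J)‖ = Real.sqrt ‖∑ J ∈ 𝒥, star (α J) * α J‖ ∧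
      ∀ K' ∈ 𝒥, ‖α K'‖ ≤ ‖∑ J ∈ 𝒥, π (α J) * ι (sWord s J)‖ := by
  set T := ∑ J ∈ 𝒥, π (α J) * ι (sWord s J) with hT
  set A := ∑ J ∈ 𝒥, star (α J) * α J with hA
  have key : ∀ J K' : Fin m → Fin N,
      star (π (α J) * ι (sWord s J)) * (π (α K') * ι (sWord s K')) =
        if J = K' then π (star (α J) * α K') else 0 := by
    intro J K'
    calc star (π (α J) * ι (sWord s J)) * (π (α K') * ι (sWord s K'))
        = ι (star (sWord s J)) * π (star (α J)) * (π (α K') * ι (sWord s K')) := by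
          rw [star_mul, map_star, map_star]
      _ = π (star (α J)) * ι (star (sWord s J)) * (π (α K') * ι (sWord s K')) := by
          rw [((hcomm (star (α J)) (star (sWord s J))).eq)]
      _ = π (star (α J)) * π (α K') * (ι (star (sWord s J)) * ι (sWord s K')) := by
          rw [mul_assoc, mul_assoc, ← mul_assoc (ι (star (sWord s J))),
            (hcomm (α K') (star (sWord s J))).eq.symm, mul_assoc]
      _ = π (star (α J) * α K') * ι (star (sWord s J) * sWord s K') := by
          rw [map_mul, map_mul]
      _ = if J = K' then π (star (α J) * α K') else 0 := by
          rw [sWord_star_mul s hs J K']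
          by_cases h : J = K'
          · simp [h]
          · simp [h]
  have hTT : star T * T = π A := by
    rw [hT, star_sum, Finset.sum_mul_sum, hA, map_sum]
    refine Finset.sum_congr rfl fun J hJ => ?_
    rw [Finset.sum_congr rfl fun K' _ => key J K']
    simp [Finset.sum_ite_eq, hJ]
  have hπn : ∀ x, ‖π x‖ = ‖x‖ := fun x => hπ.norm_map_of_map_zero (map_zero π) x
  have hnorm : ‖T‖ * ‖T‖ = ‖A‖ := by
    rw [← CStarRing.norm_star_mul_self, hTT, hπn]
  have hmain : ‖T‖ = Real.sqrt ‖A‖ := by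
    rw [← hnorm, Real.sqrt_mul_self (norm_nonneg T)]
  refine ⟨hmain, fun K' hK' => ?_⟩
  have hle : star (α K') * α K' ≤ A :=
    Finset.single_le_sum (fun J _ => star_mul_self_nonneg (α J)) hK'
  have h1 : ‖star (α K') * α K'‖ ≤ ‖A‖ :=
    CStarAlgebra.norm_le_norm_of_nonneg_of_le (star_mul_self_nonneg _) hle
  calc ‖α K'‖ = Real.sqrt ‖star (α K') * α K'‖ := by
        rw [CStarRing.norm_star_mul_self, Real.sqrt_mul_self (norm_nonneg _)]
    _ ≤ Real.sqrt ‖A‖ := Real.sqrt_le_sqrt h1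
    _ = ‖T‖ := hmain.symm
end

section
/- The map T : {1,2}^ℕ → {1,2}^ℕ defined by (T w)_k = 1 if the number of j ≤ k with w_j = 1 is odd, and 2 otherwise, has topological entropy 0. -/
/-!
The parity map is causal: `(T w)_k` depends only on `w_0, …, w_k`. So `T` maps each cylinder
entourage ("agree on the first `n` coordinates") into itself, and for such an entourage `U` every
`(U, m)`-dynamical entourage contains `U`. A single finite `U`-cover of the compact space is thus a
`(U, m)`-dynamical cover for every `m`: the minimal cover sizes stay bounded, so they grow at
exponential rate `0`.
-/

/-- The map `T` on `{1,2}^ℕ` (modelled as `ℕ → Bool`, `true` standing for the symbol `1`):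
`(T w)_k = 1` iff the number of indices `j ≤ k` with `w_j = 1` is odd. -/
def parityMap (w : ℕ → Bool) : ℕ → Bool := fun k =>
  decide (Odd ((Finset.range (k + 1)).filter fun j => w j = true).card)

open Set Filter Uniformity

namespace Dynamics

variable {X : Type*} {T : X → X} {F : Set X} {U : SetRel X X}

lemma subset_dynEntourage_of_mapsTo (hU : MapsTo (Prod.map T T) U U) (n : ℕ) :
    U ⊆ dynEntourage T U n := fun _ hp ↦
  mem_dynEntourage.2 fun k _ ↦ (Prod.map_iterate T T k ▸ hU.iterate k) hp

lemma coverEntropyEntourage_nonpos_of_mapsTo (hU : MapsTo (Prod.map T T) U U) {s : Finset X}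
    (hs : U.IsCover F s) : coverEntropyEntourage T F U ≤ 0 := by
  have hmin (n : ℕ) : coverMincard T F U n ≤ s.card :=
    IsDynCoverOf.coverMincard_le_card (hs.mono_entourage (subset_dynEntourage_of_mapsTo hU n))
  calc coverEntropyEntourage T F U ≤ ExpGrowth.expGrowthSup fun _ ↦ 1 :=
        ExpGrowth.expGrowthSup_le_of_eventually_le (b := s.card) (by simp)
          (Eventually.of_forall fun n ↦ by simpa using ENat.toENNReal_mono (hmin n))
    _ = 0 := ExpGrowth.expGrowthSup_const one_ne_zero ENNReal.one_ne_top

theorem coverEntropy_nonpos_of_hasBasis_mapsTo [UniformSpace X] {ι : Sort*} {p : ι → Prop}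
    {V : ι → SetRel X X} (hV : (𝓤 X).HasBasis p V)
    (hT : ∀ i, p i → MapsTo (Prod.map T T) (V i) (V i)) (hF : TotallyBounded F) :
    coverEntropy T F ≤ 0 := by
  rw [coverEntropy_eq_iSup_basis hV]
  refine iSup₂_le fun i hi ↦ ?_
  obtain ⟨t, ht, hFt⟩ := hF (V i) (hV.mem_of_mem hi)
  refine coverEntropyEntourage_nonpos_of_mapsTo (hT i hi) (s := ht.toFinset) ?_
  simpa [SetRel.IsCover, subset_def] using hFt

end Dynamics

def cylinderEntourage (α : Type*) (n : ℕ) : SetRel (ℕ → α) (ℕ → α) :=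
  {p | p.1 ∈ PiNat.cylinder p.2 n}

lemma hasBasis_uniformity_cylinderEntourage (α : Type*) [UniformSpace α] [DiscreteUniformity α] :
    (𝓤 (ℕ → α)).HasBasis (fun _ ↦ True) (cylinderEntourage α) := by
  have hcoord : 𝓤 (ℕ → α) = ⨅ i : ℕ, 𝓟 {p : (ℕ → α) × (ℕ → α) | p.1 i = p.2 i} := by
    simp only [Pi.uniformity, DiscreteUniformity.eq_principal_setRelId, comap_principal]
    rfl
  rw [hcoord]
  refine (hasBasis_iInf_principal_finite _).to_hasBasis (fun t ht ↦ ?_) fun n _ ↦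
    ⟨Iio n, finite_Iio n, fun p hp i hi ↦ mem_iInter₂.1 hp i hi⟩
  obtain ⟨n, hn⟩ := ht.bddAbove
  exact ⟨n + 1, trivial, fun p hp ↦ mem_iInter₂.2 fun i hi ↦ hp i (Nat.lt_succ_of_le (hn hi))⟩

lemma parityMap_congr {x y : ℕ → Bool} {k : ℕ} (h : ∀ j ≤ k, x j = y j) :
    parityMap x k = parityMap y k := by
  unfold parityMap
  congr 3
  exact Finset.filter_congr fun j hj ↦ by rw [h j (Nat.lt_succ_iff.1 (Finset.mem_range.1 hj))]

lemma parityMap_mapsTo_cylinderEntourage (n : ℕ) :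
    MapsTo (Prod.map parityMap parityMap) (cylinderEntourage Bool n) (cylinderEntourage Bool n) := by
  rintro ⟨x, y⟩ hxy i hi
  exact parityMap_congr fun j hj ↦ hxy j (hj.trans_lt hi)

/-- the parity map has topological entropy `0`. -/
theorem stmt4 : Dynamics.coverEntropy parityMap Set.univ = 0 :=
  le_antisymm
    (Dynamics.coverEntropy_nonpos_of_hasBasis_mapsTo (hasBasis_uniformity_cylinderEntourage Bool)
      (fun n _ ↦ parityMap_mapsTo_cylinderEntourage n) isCompact_univ.totallyBounded)
    (Dynamics.coverEntropy_nonneg _ univ_nonempty)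
end

section
/- Let T : {1,2}^ℕ → {1,2}^ℕ be a continuous map such that for all k ≥ 1 and all v, w ∈ {1,2}^ℕ: if v and w agree in coordinates 1,…,k but differ in coordinate k+1, then T v and T w differ in some coordinate j ≤ k. Then the topological entropy of T is at least log 2. -/
/-!
Let `U` be the entourage of pairs of sequences with equal first coordinate. Iterating the
hypothesis, two sequences that first differ at coordinate `k` have `i`-th images under `T` that
differ at coordinate `0` for some `i ≤ k`. Hence the `|α| ^ n` sequences over the alphabet `α`
that agree with a fixed sequence from coordinate `n` on form an `(U, n)`-dynamical net, so the
net entropy of `U`, and with it the topological entropy of `T`, is at least `log |α|`.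
-/

open Dynamics PiNat Set

theorem PiNat.firstDiff_le_of_apply_ne {E : ℕ → Type*} {x y : ∀ n, E n} {j : ℕ}
    (h : x j ≠ y j) : firstDiff x y ≤ j :=
  not_lt.1 fun hj ↦ h (apply_eq_of_lt_firstDiff hj)

variable {α : Type*}

theorem setOf_apply_zero_eq_mem_uniformity [UniformSpace α] [DiscreteUniformity α] :
    {p : (ℕ → α) × (ℕ → α) | p.1 0 = p.2 0} ∈ uniformity (ℕ → α) :=
  Pi.uniformContinuous_proj (fun _ ↦ α) 0 (DiscreteUniformity.relId_mem_uniformity α)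

def MovesDifferencesLeft (T : (ℕ → α) → ℕ → α) : Prop :=
  ∀ k, 1 ≤ k → ∀ v w : ℕ → α,
    (∀ j, j < k → v j = w j) → v k ≠ w k → ∃ j, j < k ∧ T v j ≠ T w j

namespace MovesDifferencesLeft

variable {T : (ℕ → α) → ℕ → α}

theorem exists_iterate_apply_zero_ne (hT : MovesDifferencesLeft T) {x y : ℕ → α}
    (hxy : x ≠ y) : ∃ i ≤ firstDiff x y, T^[i] x 0 ≠ T^[i] y 0 := by
  induction hk : firstDiff x y using Nat.strong_induction_on generalizing x y with
  | _ k ih =>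
  rcases Nat.eq_zero_or_pos k with rfl | hk_pos
  · exact ⟨0, le_rfl, by simpa [hk] using apply_firstDiff_ne hxy⟩
  obtain ⟨j, hjk, hTj⟩ := hT k hk_pos x y (fun j hj ↦ apply_eq_of_lt_firstDiff (hk ▸ hj))
    (hk ▸ apply_firstDiff_ne hxy)
  have hTk : firstDiff (T x) (T y) < k := (firstDiff_le_of_apply_ne hTj).trans_lt hjk
  obtain ⟨i, hi, hne⟩ := ih _ hTk (fun h ↦ hTj (congrFun h j)) rfl
  exact ⟨i + 1, by omega, by simpa only [Function.iterate_succ_apply] using hne⟩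

theorem isDynNetIn (hT : MovesDifferencesLeft T) {n : ℕ} {s : Set (ℕ → α)}
    (hs : s.Pairwise fun x y ↦ firstDiff x y < n) :
    IsDynNetIn T univ {p | p.1 0 = p.2 0} n s := by
  refine ⟨subset_univ s, fun x hx y hy hxy ↦ disjoint_left.2 fun z hxz hyz ↦ ?_⟩
  obtain ⟨i, hi, hne⟩ := hT.exists_iterate_apply_zero_ne hxy
  have hin : i < n := hi.trans_lt (hs hx hy hxy)
  exact hne ((mem_dynEntourage.1 hxz i hin).trans (mem_dynEntourage.1 hyz i hin).symm)

theorem card_pow_le_netMaxcard [Fintype α] [Nonempty α] (hT : MovesDifferencesLeft T) (n : ℕ) :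
    (Fintype.card α : ℕ∞) ^ n ≤ netMaxcard T univ {p | p.1 0 = p.2 0} n := by
  classical
  let E : (Fin n → α) → ℕ → α := fun f ↦ Function.extend Fin.val f fun _ ↦ Classical.arbitrary α
  have hE (f : Fin n → α) (i : Fin n) : E f i = f i := Fin.val_injective.extend_apply _ _ _
  have hE_inj : E.Injective := fun f g h ↦ funext fun i ↦ by rw [← hE f i, ← hE g i, h]
  have hnet : IsDynNetIn T univ {p | p.1 0 = p.2 0} n ↑(Finset.univ.image E) := by
    refine hT.isDynNetIn ?_
    simp only [Finset.coe_image, Finset.coe_univ, image_univ]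
    rintro _ ⟨f, rfl⟩ _ ⟨g, rfl⟩ hfg
    obtain ⟨i, hi⟩ := Function.ne_iff.1 (ne_of_apply_ne E hfg)
    exact (firstDiff_le_of_apply_ne (by rwa [hE, hE])).trans_lt i.isLt
  simpa [Finset.card_image_of_injective _ hE_inj] using hnet.card_le_netMaxcard

theorem log_card_le_coverEntropy [Fintype α] [Nonempty α] [UniformSpace α] [DiscreteUniformity α]
    (hT : MovesDifferencesLeft T) : ENNReal.log (Fintype.card α) ≤ coverEntropy T univ :=
  calc ENNReal.log (Fintype.card α)
      = ExpGrowth.expGrowthSup fun n ↦ (Fintype.card α : ENNReal) ^ n :=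
        ExpGrowth.expGrowthSup_pow.symm
    _ ≤ netEntropyEntourage T univ {p | p.1 0 = p.2 0} :=
        ExpGrowth.expGrowthSup_monotone fun n ↦ by
          simpa using ENat.toENNReal_mono (hT.card_pow_le_netMaxcard n)
    _ ≤ coverEntropy T univ :=
        netEntropyEntourage_le_coverEntropy T univ setOf_apply_zero_eq_mem_uniformity

end MovesDifferencesLeft

theorem stmt5_general (T : (ℕ → Bool) → ℕ → Bool)
    (hT : ∀ k, 1 ≤ k → ∀ v w : ℕ → Bool,
      (∀ j, j < k → v j = w j) → v k ≠ w k → ∃ j, j < k ∧ T v j ≠ T w j) :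
    (Real.log 2 : EReal) ≤ Dynamics.coverEntropy T Set.univ := by
  have h := MovesDifferencesLeft.log_card_le_coverEntropy (α := Bool) hT
  rwa [Fintype.card_bool, ENNReal.log_pos_real (by simp) (by simp)] at h

/-- if `T : {1,2}^ℕ → {1,2}^ℕ` (modelled as `ℕ → Bool`, coordinate `j : ℕ`
standing for the `(j+1)`-st coordinate) is continuous and whenever two sequences agree in their
first `k` coordinates (`k ≥ 1`) but differ in the `(k+1)`-st, their images under `T` differ in
one of the first `k` coordinates, then the topological entropy of `T` is at least `log 2`. -/
theorem stmt5 (T : (ℕ → Bool) → ℕ → Bool) (hTcont : Continuous T)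
    (hT : ∀ k, 1 ≤ k → ∀ v w : ℕ → Bool,
      (∀ j, j < k → v j = w j) → v k ≠ w k → ∃ j, j < k ∧ T v j ≠ T w j) :
    (Real.log 2 : EReal) ≤ Dynamics.coverEntropy T Set.univ :=
  stmt5_general T hT
end

section
/- The map T : {1,2}^ℕ → {1,2}^ℕ defined by (T w)_k = 1 if the number of maximal constant segments of the finite word w₁ w₂ … w_{k+1} is even, and (T w)_k = 2 if it is odd, is continuous and has topological entropy at least log 2. -/
/-- The map `T` on `{1,2}^ℕ` (modelled as `ℕ → Bool`, coordinate `j : ℕ` standing for the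
`(j+1)`-st coordinate): `(T w)_k = 1` iff the number of maximal constant segments of the
finite word `w₁ … w_{k+2}` (namely `1 + #{j ≤ k : w_j ≠ w_{j+1}}`) is even. -/
def segParityMap (w : ℕ → Bool) : ℕ → Bool := fun k =>
  decide (Even (1 + ((Finset.range (k + 1)).filter fun j => w j ≠ w (j + 1)).card))

/-!
The letter `(T w)_k` depends only on `w_0, …, w_{k+1}`, which gives continuity, and it changes
whenever `w_{k+1}` does while `w_0, …, w_k` stay fixed. Iterating, the `0`-th letters of
`w, T w, …, T^{n-1} w` determine `w_0, …, w_{n-1}`, so the `2^n` words with distinct prefixes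
of length `n` are `(n, U)`-separated for the entourage `U` of agreement at coordinate `0`.
Hence `T` has entropy at least `log 2`; this works over any finite alphabet `α`, giving
`log |α|`.
-/

open Dynamics Set Function

namespace SequenceMap

variable {α : Type*}

def DependsOnPrefix (T : (ℕ → α) → ℕ → α) : Prop :=
  ∀ k w w', (∀ i ≤ k + 1, w i = w' i) → T w k = T w' k

def SensitiveToLookahead (T : (ℕ → α) → ℕ → α) : Prop :=
  ∀ k w w', (∀ i ≤ k, w i = w' i) → w (k + 1) ≠ w' (k + 1) → T w k ≠ T w' k

variable {T : (ℕ → α) → ℕ → α}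

theorem continuous_of_dependsOnPrefix [TopologicalSpace α] [DiscreteTopology α]
    (hdep : DependsOnPrefix T) : Continuous T := by
  refine continuous_pi fun k => IsLocallyConstant.continuous <|
    (IsLocallyConstant.iff_eventually_eq _).2 fun w => ?_
  have hnear : ∀ᶠ w' in nhds w, ∀ i ∈ Finset.range (k + 2), w' i = w i :=
    (Finset.eventually_all _).2 fun i _ =>
      (continuous_apply i).continuousAt.eventually_mem
        ((isOpen_discrete {w i}).mem_nhds rfl)
  filter_upwards [hnear] with w' hw'
  exact hdep k w' w fun i hi => hw' i (Finset.mem_range.2 (by omega))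

theorem iterate_apply_zero_ne (hdep : DependsOnPrefix T) (hflip : SensitiveToLookahead T)
    (m : ℕ) :
    ∀ w w', (∀ i < m, w i = w' i) → w m ≠ w' m → T^[m] w 0 ≠ T^[m] w' 0 := by
  induction m with
  | zero => exact fun w w' _ h => h
  | succ m ih =>
    intro w w' heq hne
    exact ih _ _ (fun l hl => hdep l w w' fun i hi => heq i (by omega))
      (hflip m w w' (fun i hi => heq i (by omega)) hne)

theorem eqOn_of_iterate_apply_zero_eq (hdep : DependsOnPrefix T) (hflip : SensitiveToLookahead T)
    {n : ℕ} {w w' : ℕ → α} (h : ∀ k < n, T^[k] w 0 = T^[k] w' 0) :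
    ∀ i < n, w i = w' i := by
  classical
  by_contra! hdiff
  have hmin : ∀ i < Nat.find hdiff, w i = w' i := fun i hi => by
    by_contra hne
    exact Nat.find_min hdiff hi ⟨(Nat.find_spec hdiff).1.trans' hi, hne⟩
  obtain ⟨hlt, hne⟩ := Nat.find_spec hdiff
  exact iterate_apply_zero_ne hdep hflip _ w w' hmin hne (h _ hlt)

theorem pow_card_le_netMaxcard [Fintype α] [Inhabited α]
    (hdep : DependsOnPrefix T) (hflip : SensitiveToLookahead T)
    (n : ℕ) : (Fintype.card α : ℕ∞) ^ n ≤ netMaxcard T univ {p | p.1 0 = p.2 0} n := by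
  classical
  let s := Finset.univ.image fun u : Fin n → α => extend Fin.val u default
  have hcard : s.card = Fintype.card α ^ n := by
    rw [Finset.card_image_of_injective _ (extend_injective Fin.val_injective _),
      Finset.card_univ, Fintype.card_fun, Fintype.card_fin]
  have hnet : IsDynNetIn T univ {p | p.1 0 = p.2 0} n s := by
    refine ⟨subset_univ _, fun x hx y hy hxy => disjoint_left.2 fun z hzx hzy => hxy ?_⟩
    simp only [s, Finset.coe_image, Finset.coe_univ, image_univ, mem_range] at hx hy
    obtain ⟨u, rfl⟩ := hx
    obtain ⟨v, rfl⟩ := hy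
    rw [mem_ball_dynEntourage] at hzx hzy
    have hagree := eqOn_of_iterate_apply_zero_eq hdep hflip fun k hk =>
      (hzx k hk).trans (hzy k hk).symm
    congr 1
    funext i
    simpa only [Fin.val_injective.extend_apply] using hagree i i.isLt
  exact_mod_cast hcard ▸ hnet.card_le_netMaxcard

theorem log_card_le_coverEntropy [Fintype α] [Inhabited α] [UniformSpace α]
    [DiscreteUniformity α]
    (hdep : DependsOnPrefix T) (hflip : SensitiveToLookahead T) :
    ENNReal.log (Fintype.card α) ≤ coverEntropy T univ := by
  have hU : {p : (ℕ → α) × (ℕ → α) | p.1 0 = p.2 0} ∈ uniformity (ℕ → α) :=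
    Pi.uniformContinuous_proj (fun _ => α) 0 (DiscreteUniformity.relId_mem_uniformity α)
  calc ENNReal.log (Fintype.card α)
        = ExpGrowth.expGrowthSup fun n => (Fintype.card α : ENNReal) ^ n :=
        ExpGrowth.expGrowthSup_pow.symm
    _ ≤ netEntropyEntourage T univ {p | p.1 0 = p.2 0} :=
        ExpGrowth.expGrowthSup_monotone fun n => by
          simpa using ENat.toENNReal_mono (pow_card_le_netMaxcard hdep hflip n)
    _ ≤ coverEntropy T univ := netEntropyEntourage_le_coverEntropy T univ hU

end SequenceMap

theorem filter_range_ne_succ_congr {n : ℕ} {w w' : ℕ → Bool} (h : ∀ i ≤ n, w i = w' i) :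
    ((Finset.range n).filter fun j => w j ≠ w (j + 1))
      = (Finset.range n).filter fun j => w' j ≠ w' (j + 1) :=
  Finset.filter_congr fun j hj => by
    rw [h j (by simp at hj; omega), h (j + 1) (by simp at hj; omega)]

theorem segParityMap_apply_eq {k : ℕ} {w w' : ℕ → Bool} (h : ∀ i ≤ k + 1, w i = w' i) :
    segParityMap w k = segParityMap w' k := by
  rw [segParityMap, segParityMap, filter_range_ne_succ_congr h]

theorem segParityMap_apply_ne {k : ℕ} {w w' : ℕ → Bool} (h : ∀ i ≤ k, w i = w' i)
    (hne : w (k + 1) ≠ w' (k + 1)) : segParityMap w k ≠ segParityMap w' k := by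
  have hlast : w' (k + 1) = !w (k + 1) := by
    revert hne; cases w (k + 1) <;> cases w' (k + 1) <;> simp
  unfold segParityMap
  rw [Finset.range_add_one, Finset.filter_insert, Finset.filter_insert,
    ← filter_range_ne_succ_congr fun i hi => h i (by omega), hlast, ← h k le_rfl]
  -- with `w k` fixed and `w (k + 1)` flipped, exactly one of the two words gains a change point
  cases w k <;> cases w (k + 1) <;>
    simp [Finset.card_insert_of_notMem, ← add_assoc, Nat.even_add_one, -Nat.not_even_iff_odd]

/-- the constant-segment-parity map is continuous and has topological entropy
at least `log 2`. -/
theorem stmt9 :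
    Continuous segParityMap ∧
      (Real.log 2 : EReal) ≤ Dynamics.coverEntropy segParityMap Set.univ := by
  have hdep : SequenceMap.DependsOnPrefix segParityMap := fun _ _ _ => segParityMap_apply_eq
  have hflip : SequenceMap.SensitiveToLookahead segParityMap :=
    fun _ _ _ => segParityMap_apply_ne
  have hlog : ENNReal.log (Fintype.card Bool) = Real.log 2 := by
    simpa using ENNReal.log_ofReal_of_pos (x := 2) two_pos
  exact ⟨SequenceMap.continuous_of_dependsOnPrefix hdep,
    hlog ▸ SequenceMap.log_card_le_coverEntropy hdep hflip⟩
end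

section
/- Let s₁, s₂ be isometries on a Hilbert space satisfying the Cuntz relations s_i* s_j = δ_{ij}·1 and s₁s₁* + s₂s₂* = 1, and let X = s₁ s₂* + s₂ s₁*. Define the endomorphism-like map on operators θ(x) = s₁ x s₁* + s₂ x s₂*, and let ψ be the unital *-homomorphism determined by ψ(s₁) = s₁ s₂ s₁* + s₁ s₁ s₂* and ψ(s₂) = s₂ (assuming such a homomorphism on the generated *-algebra). Then ψ(X) = s₁ X s₂* + s₂ X s₁*, and ψ(θ(X)) = θ(ψ(X)). -/
set_option maxHeartbeats 2000000


/-- `X = s₁ s₂* + s₂ s₁*`. -/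
def cuntzX {A : Type*} [Ring A] [StarRing A] (s₁ s₂ : A) : A :=
  s₁ * star s₂ + s₂ * star s₁

/-- The canonical shift `θ(x) = s₁ x s₁* + s₂ x s₂*`. -/
def cuntzShift {A : Type*} [Ring A] [StarRing A] (s₁ s₂ : A) (x : A) : A :=
  s₁ * x * star s₁ + s₂ * x * star s₂

/-- for Cuntz isometries `s₁, s₂` and a unital *-homomorphism `ψ` with
`ψ(s₁) = s₁s₂s₁* + s₁s₁s₂*`, `ψ(s₂) = s₂`, one has `ψ(X) = s₁ X s₂* + s₂ X s₁*` and
`ψ(θ(X)) = θ(ψ(X))`. -/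
theorem stmt11 {A : Type*} [Ring A] [StarRing A] [Algebra ℂ A] (s₁ s₂ : A)
    (h11 : star s₁ * s₁ = 1) (h12 : star s₁ * s₂ = 0)
    (h21 : star s₂ * s₁ = 0) (h22 : star s₂ * s₂ = 1)
    (hsum : s₁ * star s₁ + s₂ * star s₂ = 1)
    (ψ : A →⋆ₐ[ℂ] A)
    (hψ1 : ψ s₁ = s₁ * s₂ * star s₁ + s₁ * s₁ * star s₂) (hψ2 : ψ s₂ = s₂) :
    ψ (cuntzX s₁ s₂) = s₁ * cuntzX s₁ s₂ * star s₂ + s₂ * cuntzX s₁ s₂ * star s₁ ∧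
      ψ (cuntzShift s₁ s₂ (cuntzX s₁ s₂)) = cuntzShift s₁ s₂ (ψ (cuntzX s₁ s₂)) := by
  have h11' : ∀ x : A, star s₁ * (s₁ * x) = x := fun x => by
    rw [← mul_assoc, h11, one_mul]
  have h12' : ∀ x : A, star s₁ * (s₂ * x) = 0 := fun x => by
    rw [← mul_assoc, h12, zero_mul]
  have h21' : ∀ x : A, star s₂ * (s₁ * x) = 0 := fun x => by
    rw [← mul_assoc, h21, zero_mul]
  have h22' : ∀ x : A, star s₂ * (s₂ * x) = x := fun x => by
    rw [← mul_assoc, h22, one_mul]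
  constructor
  · simp only [cuntzX, map_add, map_mul, map_star, hψ1, hψ2, star_add, star_mul, star_star]
    noncomm_ring
  · simp only [cuntzX, cuntzShift, map_add, map_mul, map_star, hψ1, hψ2, star_add, star_mul,
      star_star]
    simp only [mul_add, add_mul, mul_assoc, h11, h12, h21, h22, h11', h12', h21', h22',
      mul_one, mul_zero, zero_mul, one_mul, add_zero, zero_add]
    abel
end
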